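/- The full binary tree of depth k has pathwidth exactly ⌈k/2⌉. -/

import Mathlib

/-!
Upper bound: a decomposition of the subtree of depth `d + 2` at `v` is obtained from those of
the four subtrees at the grandchildren `vij`: add `vi` to every bag of the two below `vi`, and
join the two halves through the bags `{v0, v}` and `{v, v1}`. The width grows by one every two
levels.

Lower bound: every path decomposition has a bag containing `⌈d/2⌉ + 1` vertices of any subtree
of depth `d`. Given such heavy bags for the subtrees at `v00`, `v01`, `v10`, the middle one of
the three also meets the rest of the subtree at `v`, which is connected and meets the other two
bags, so it contains one more vertex.
-/

open Finset Relation

section HoldsOnInterval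

variable {α : Type*} {p : α → Prop}

def HoldsOnInterval (p : α → Prop) (L : List α) : Prop :=
  ∀ i j l (_ : i ≤ j) (_ : j ≤ l) (hl : l < L.length), p L[i] → p L[l] → p L[j]

theorem holdsOnInterval_of_forall {L : List α} (h : ∀ x ∈ L, p x) : HoldsOnInterval p L :=
  fun _ _ _ _ _ _ _ _ => h _ (List.getElem_mem _)

theorem holdsOnInterval_of_length_le_two {L : List α} (h : L.length ≤ 2) :
    HoldsOnInterval p L := by
  intro i j l _ _ _ hi hl
  obtain rfl | rfl : j = i ∨ j = l := by omega
  exacts [hi, hl]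

theorem holdsOnInterval_map {β : Type*} {f : β → α} {L : List β} :
    HoldsOnInterval p (L.map f) ↔ HoldsOnInterval (p ∘ f) L := by
  simp only [HoldsOnInterval, List.length_map, List.getElem_map, Function.comp]

theorem HoldsOnInterval.append {A B : List α} (hA : HoldsOnInterval p A)
    (hB : HoldsOnInterval p B)
    (hglue : ∀ a ∈ A, ∀ b ∈ B, p a → p b →
      ∀ hA hB, p (A.getLast hA) ∧ p (B.head hB)) :
    HoldsOnInterval p (A ++ B) := by
  intro i j l hij hjl hl hi hl'
  rw [List.length_append] at hl
  by_cases hlA : l < A.length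
  · simp only [List.getElem_append_left (show i < A.length by omega),
      List.getElem_append_left (show j < A.length by omega), List.getElem_append_left hlA] at *
    exact hA i j l hij hjl hlA hi hl'
  by_cases hiA : i < A.length
  · rw [List.getElem_append_left hiA] at hi
    rw [List.getElem_append_right (by omega)] at hl'
    obtain ⟨hlast, hhead⟩ := hglue _ (List.getElem_mem _) _ (List.getElem_mem _) hi hl'
      (List.ne_nil_of_length_pos (by omega)) (List.ne_nil_of_length_pos (by omega))
    rw [List.getLast_eq_getElem] at hlast
    rw [List.head_eq_getElem] at hhead
    by_cases hjA : j < A.length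
    · rw [List.getElem_append_left hjA]
      exact hA i j _ hij (by omega) (by omega) hi hlast
    · rw [List.getElem_append_right (by omega)]
      exact hB 0 _ _ (Nat.zero_le _) (by omega) (by omega) hhead hl'
  · simp only [List.getElem_append_right (show A.length ≤ i by omega),
      List.getElem_append_right (show A.length ≤ j by omega),
      List.getElem_append_right (show A.length ≤ l by omega)] at *
    exact hB _ _ _ (by omega) (by omega) (by omega) hi hl'

end HoldsOnInterval

theorem List.eq_of_append_singleton_prefix {α : Type*} {v w : List α} {i j : α}
    (hi : v ++ [i] <+: w) (hj : v ++ [j] <+: w) : i = j := by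
  simpa using (List.prefix_of_prefix_length_le hi hj (by simp)).eq_of_length (by simp)

theorem List.eq_or_append_singleton_prefix {α : Type*} {v w : List α} (h : v <+: w) :
    w = v ∨ ∃ j, v ++ [j] <+: w := by
  obtain ⟨_ | ⟨j, s⟩, rfl⟩ := h
  · simp
  · exact Or.inr ⟨j, s, by simp⟩

def subtree (v : List (Fin 2)) (d : ℕ) : Set (List (Fin 2)) :=
  {w | v <+: w ∧ w.length ≤ v.length + d}

instance (v : List (Fin 2)) (d : ℕ) : DecidablePred (· ∈ subtree v d) :=
  fun w => inferInstanceAs (Decidable (v <+: w ∧ _))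

theorem self_mem_subtree (v : List (Fin 2)) (d : ℕ) : v ∈ subtree v d :=
  ⟨List.prefix_rfl, by omega⟩

theorem subtree_append_subset {v s : List (Fin 2)} {d : ℕ} :
    subtree (v ++ s) d ⊆ subtree v (d + s.length) := fun _ ⟨hw, hlen⟩ =>
  ⟨(List.prefix_append v s).trans hw, by simp only [List.length_append] at hlen; omega⟩

theorem mem_subtree_succ {v w : List (Fin 2)} {d : ℕ} (hw : w ∈ subtree v (d + 1)) :
    w = v ∨ ∃ j, w ∈ subtree (v ++ [j]) d := by
  refine (List.eq_or_append_singleton_prefix hw.1).imp_right fun ⟨j, hj⟩ => ⟨j, hj, ?_⟩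
  have := hw.2
  simp only [List.length_append, List.length_singleton]
  omega

structure IsPathDecompOfSubtree (v : List (Fin 2)) (d : ℕ) (L : List (Finset (List (Fin 2)))) :
    Prop where
  subset : ∀ S ∈ L, ∀ w ∈ S, w ∈ subtree v d
  cover : ∀ w ∈ subtree v d, ∃ S ∈ L, w ∈ S
  edge : ∀ w (j : Fin 2), v <+: w → w.length < v.length + d →
    ∃ S ∈ L, w ∈ S ∧ w ++ [j] ∈ S
  interval : ∀ w, HoldsOnInterval (w ∈ ·) L

theorem isPathDecompOfSubtree_singleton (v : List (Fin 2)) : IsPathDecompOfSubtree v 0 [{v}] where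
  subset _ hS w hw := by
    obtain rfl : w = v := by simpa [List.mem_singleton.mp hS] using hw
    exact self_mem_subtree w 0
  cover w hw := ⟨{v}, List.mem_singleton_self _, by simpa using (hw.1.eq_of_length (by
    have := hw.1.length_le; have := hw.2; omega)).symm⟩
  edge _ _ hw h := absurd hw.length_le (by omega)
  interval _ := holdsOnInterval_of_length_le_two (by simp)

section UpperBound

variable {u v : List (Fin 2)} {d c : ℕ} {D H : Fin 2 → List (Finset (List (Fin 2)))}
  {S T : Finset (List (Fin 2))}

def addRoot (u : List (Fin 2)) (D : Fin 2 → List (Finset (List (Fin 2)))) :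
    List (Finset (List (Fin 2))) :=
  (D 0 ++ D 1).map (insert u)

theorem mem_addRoot : S ∈ addRoot u D ↔ ∃ j, ∃ T ∈ D j, insert u T = S := by
  simp only [addRoot, List.mem_map, List.mem_append, Fin.exists_fin_two]
  aesop

theorem insert_mem_addRoot {j : Fin 2} (hT : T ∈ D j) : insert u T ∈ addRoot u D :=
  mem_addRoot.mpr ⟨j, T, hT, rfl⟩

theorem root_mem_of_mem_addRoot (hS : S ∈ addRoot u D) : u ∈ S := by
  obtain ⟨j, T, -, rfl⟩ := mem_addRoot.mp hS
  exact mem_insert_self u T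

theorem card_le_of_mem_addRoot (hD : ∀ j, ∀ T ∈ D j, T.card ≤ c) (hS : S ∈ addRoot u D) :
    S.card ≤ c + 1 := by
  obtain ⟨j, T, hT, rfl⟩ := mem_addRoot.mp hS
  exact (card_insert_le u T).trans (by simpa using hD j T hT)

theorem IsPathDecompOfSubtree.addRoot
    (hD : ∀ j, IsPathDecompOfSubtree (u ++ [j]) d (D j)) :
    IsPathDecompOfSubtree u (d + 1) (addRoot u D) where
  subset S hS w hw := by
    obtain ⟨j, T, hT, rfl⟩ := mem_addRoot.mp hS
    obtain rfl | hw := mem_insert.mp hw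
    · exact self_mem_subtree w _
    · exact subtree_append_subset ((hD j).subset T hT w hw)
  cover w hw := by
    obtain rfl | ⟨j, hw⟩ := mem_subtree_succ hw
    · obtain ⟨T, hT, -⟩ := (hD 0).cover _ (self_mem_subtree _ d)
      exact ⟨_, insert_mem_addRoot hT, mem_insert_self w T⟩
    · obtain ⟨T, hT, hwT⟩ := (hD j).cover w hw
      exact ⟨_, insert_mem_addRoot hT, mem_insert_of_mem hwT⟩
  edge w j hw hlen := by
    obtain rfl | ⟨i, hi⟩ := List.eq_or_append_singleton_prefix hw
    · obtain ⟨T, hT, hwT⟩ := (hD j).cover _ (self_mem_subtree _ d)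
      exact ⟨_, insert_mem_addRoot hT, mem_insert_self w T, mem_insert_of_mem hwT⟩
    · obtain ⟨T, hT, hwT, hwjT⟩ := (hD i).edge w j hi (by simp; omega)
      exact ⟨_, insert_mem_addRoot hT, mem_insert_of_mem hwT, mem_insert_of_mem hwjT⟩
  interval w := by
    by_cases hwu : w = u
    · exact holdsOnInterval_of_forall fun S hS => hwu ▸ root_mem_of_mem_addRoot hS
    refine holdsOnInterval_map.mpr ?_
    simp only [Function.comp_def, mem_insert, hwu, false_or]
    refine ((hD 0).interval w).append ((hD 1).interval w) fun a ha b hb hwa hwb _ _ => ?_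
    -- `w` cannot lie below both children of `u`
    exact absurd (List.eq_of_append_singleton_prefix ((hD 0).subset a ha w hwa).1
      ((hD 1).subset b hb w hwb).1) (by decide)

def bridge (v : List (Fin 2)) (H : Fin 2 → List (Finset (List (Fin 2)))) :
    List (Finset (List (Fin 2))) :=
  H 0 ++ [{v ++ [0], v}, {v, v ++ [1]}] ++ H 1

theorem mem_bridge :
    S ∈ bridge v H ↔ (∃ j, S ∈ H j) ∨ S = {v ++ [0], v} ∨ S = {v, v ++ [1]} := by
  simp only [bridge, List.mem_append, List.mem_cons, List.not_mem_nil, Fin.exists_fin_two]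
  tauto

theorem card_le_of_mem_bridge (hH : ∀ j, ∀ S ∈ H j, S.card ≤ c) (hc : 2 ≤ c)
    (hS : S ∈ bridge v H) : S.card ≤ c := by
  obtain ⟨j, hS⟩ | rfl | rfl := mem_bridge.mp hS
  · exact hH j S hS
  all_goals exact (card_insert_le _ _).trans (by simpa using hc)

theorem IsPathDecompOfSubtree.bridge
    (hH : ∀ j, IsPathDecompOfSubtree (v ++ [j]) d (H j))
    (hroot : ∀ j, ∀ S ∈ H j, v ++ [j] ∈ S) :
    IsPathDecompOfSubtree v (d + 1) (bridge v H) where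
  subset S hS w hw := by
    obtain ⟨j, hS⟩ | rfl | rfl := mem_bridge.mp hS
    · exact subtree_append_subset ((hH j).subset S hS w hw)
    all_goals
      simp only [mem_insert, mem_singleton] at hw
      rcases hw with rfl | rfl <;> simp [subtree]
  cover w hw := by
    obtain rfl | ⟨j, hw⟩ := mem_subtree_succ hw
    · exact ⟨_, mem_bridge.mpr (Or.inr (Or.inl rfl)), by simp⟩
    · obtain ⟨S, hS, hwS⟩ := (hH j).cover w hw
      exact ⟨S, mem_bridge.mpr (Or.inl ⟨j, hS⟩), hwS⟩
  edge w j hw hlen := by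
    obtain rfl | ⟨i, hi⟩ := List.eq_or_append_singleton_prefix hw
    · fin_cases j
      · exact ⟨_, mem_bridge.mpr (Or.inr (Or.inl rfl)), by simp⟩
      · exact ⟨_, mem_bridge.mpr (Or.inr (Or.inr rfl)), by simp⟩
    · obtain ⟨S, hS, hwS⟩ := (hH i).edge w j hi (by simp; omega)
      exact ⟨S, mem_bridge.mpr (Or.inl ⟨i, hS⟩), hwS⟩
  interval w := by
    have below (j : Fin 2) {S} (hS : S ∈ H j) (hw : w ∈ S) : v ++ [j] <+: w :=
      ((hH j).subset S hS w hw).1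
    have hmid {S : Finset (List (Fin 2))} (hS : S ∈ [{v ++ [0], v}, {v, v ++ [1]}])
        (hw : w ∈ S) (j : Fin 2) (hj : v ++ [j] <+: w) : w = v ++ [j] := by
      simp only [List.mem_cons, List.not_mem_nil, or_false] at hS
      rcases hS with rfl | rfl <;> simp only [mem_insert, mem_singleton] at hw <;>
        rcases hw with rfl | rfl
      all_goals first
        | (exfalso; simpa using hj.length_le)
        | rw [List.eq_of_append_singleton_prefix hj List.prefix_rfl]
    refine (((hH 0).interval w).append (holdsOnInterval_of_length_le_two le_rfl) ?_).append
      ((hH 1).interval w) ?_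
    · rintro a ha b hb hwa hwb - -
      obtain rfl := hmid hb hwb 0 (below 0 ha hwa)
      exact ⟨hroot 0 _ (List.getLast_mem _), by simp⟩
    · rintro a ha b hb hwa hwb - -
      obtain rfl : w = v ++ [1] := by
        rcases List.mem_append.mp ha with ha | ha
        · exact absurd (List.eq_of_append_singleton_prefix (below 0 ha hwa)
            (below 1 hb hwb)) (by decide)
        · exact hmid ha hwa 1 (below 1 hb hwb)
      exact ⟨by simp, hroot 1 _ (List.head_mem _)⟩

def decomp : ℕ → List (Fin 2) → List (Finset (List (Fin 2)))
  | 0, v => [{v}]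
  | 1, v => addRoot v fun j => decomp 0 (v ++ [j])
  | d + 2, v => bridge v fun j => addRoot (v ++ [j]) fun i => decomp d (v ++ [j] ++ [i])

theorem isPathDecompOfSubtree_decomp : ∀ d v, IsPathDecompOfSubtree v d (decomp d v)
  | 0, v => isPathDecompOfSubtree_singleton v
  | 1, _ => .addRoot fun _ => isPathDecompOfSubtree_singleton _
  | d + 2, _ => .bridge (fun _ => .addRoot fun _ => isPathDecompOfSubtree_decomp d _)
      fun _ _ => root_mem_of_mem_addRoot

theorem card_le_of_mem_decomp : ∀ d v, ∀ S ∈ decomp d v, S.card ≤ (d + 1) / 2 + 1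
  | 0, _, _, hS => by simp_all [decomp]
  | 1, _, _, hS => card_le_of_mem_addRoot (fun _ _ hT => by simp_all [decomp]) hS
  | d + 2, _, _, hS => by
    exact card_le_of_mem_bridge (c := (d + 1) / 2 + 2)
      (fun _ _ hS => card_le_of_mem_addRoot (fun _ => card_le_of_mem_decomp d _) hS)
      (by omega) hS |>.trans (by omega)

end UpperBound

theorem List.exists_fin_enum_of_ne_nil {α : Type*} {L : List α} (hL : L ≠ []) :
    ∃ (n : ℕ) (B : Fin (n + 1) → α), (∀ i, B i ∈ L) ∧ (∀ x ∈ L, ∃ i, B i = x) ∧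
      ∀ p, HoldsOnInterval p L →
        ∀ i j l, i ≤ j → j ≤ l → p (B i) → p (B l) → p (B j) := by
  have hpos := List.length_pos_iff.mpr hL
  refine ⟨L.length - 1, fun i => L[(i : ℕ)], fun i => List.getElem_mem _, fun x hx => ?_,
    fun p hp i j l hij hjl => hp i j l hij hjl (by omega)⟩
  obtain ⟨i, hi, rfl⟩ := List.getElem_of_mem hx
  exact ⟨⟨i, by omega⟩, rfl⟩

section LowerBound

variable {ι : Type*}

theorem mem_uIcc_or_mem_uIcc_or_mem_uIcc [LinearOrder ι] (a b c : ι) :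
    a ∈ Set.uIcc b c ∨ b ∈ Set.uIcc a c ∨ c ∈ Set.uIcc a b := by
  simp only [Set.mem_uIcc]
  rcases le_total a b with hab | hab <;> rcases le_total b c with hbc | hbc <;>
    rcases le_total a c with hac | hac <;> tauto

variable {α : Type*} {B : ι → Finset α}

def Linked (B : ι → Finset α) (P : α → Prop) (x y : α) : Prop :=
  P x ∧ P y ∧ ∃ i, x ∈ B i ∧ y ∈ B i

instance (P : α → Prop) : Std.Symm (Linked B P) :=
  ⟨fun _ _ ⟨hx, hy, i, hxi, hyi⟩ => ⟨hy, hx, i, hyi, hxi⟩⟩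

/-- The bags meeting a `P`-connected set of vertices form an interval. -/
theorem exists_mem_of_reflTransGen [LinearOrder ι] (hint : ∀ x, Set.OrdConnected {i | x ∈ B i})
    {P : α → Prop} {x y : α} (h : ReflTransGen (Linked B P) x y) (hx : P x)
    {a c m : ι} (ha : x ∈ B a) (hc : y ∈ B c) (hm : m ∈ Set.uIcc a c) :
    ∃ z, P z ∧ z ∈ B m := by
  induction h generalizing c with
  | refl => exact ⟨x, hx, (hint x).uIcc_subset ha hc hm⟩
  | tail _ hyz ih =>
    obtain ⟨-, hz, j, hyj, hzj⟩ := hyz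
    rcases Set.uIcc_subset_uIcc_union_uIcc hm with hm | hm
    · exact ih hyj hm
    · exact ⟨_, hz, (hint _).uIcc_subset hzj hc hm⟩

def CoversEdges (k : ℕ) (B : ι → Finset (List (Fin 2))) : Prop :=
  ∀ (w : List (Fin 2)) (j : Fin 2), w.length < k → ∃ i, w ∈ B i ∧ w ++ [j] ∈ B i

variable {k : ℕ} {B : ι → Finset (List (Fin 2))}

theorem reflTransGen_linked_of_prefix
    (hedge : CoversEdges k B)
    {P : List (Fin 2) → Prop} {v x : List (Fin 2)} (hvx : v <+: x) (hx : x.length ≤ k)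
    (hP : ∀ w, v <+: w → w <+: x → P w) : ReflTransGen (Linked B P) v x := by
  induction x using List.reverseRecOn with
  | nil =>
    obtain rfl := List.prefix_nil.mp hvx
    exact .refl
  | append_singleton x j ih =>
    rcases List.prefix_concat_iff.mp hvx with rfl | hvx
    · exact .refl
    have hxk : x.length < k := by
      simp only [List.length_append, List.length_singleton] at hx; omega
    obtain ⟨i, hxi, hxji⟩ := hedge x j hxk
    exact (ih hvx hxk.le fun w hvw hwx => hP w hvw (hwx.trans (List.prefix_append _ _))).tail
      ⟨hP x hvx (List.prefix_append _ _), hP _ (hvx.trans (List.prefix_append _ _))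
        List.prefix_rfl, i, hxi, hxji⟩

theorem le_card_filter_subtree_add_two [LinearOrder ι]
    (hint : ∀ x, Set.OrdConnected {i | x ∈ B i})
    (hedge : CoversEdges k B)
    {v : List (Fin 2)} {e : ℕ} (hk : v.length + (e + 2) ≤ k) {sa sm sc : List (Fin 2)}
    {a m c : ι} (hm : m ∈ Set.uIcc a c)
    (ha : 0 < #{w ∈ B a | w ∈ subtree (v ++ sa) e})
    (hcard : (e + 1) / 2 + 1 ≤ #{w ∈ B m | w ∈ subtree (v ++ sm) e})
    (hc : 0 < #{w ∈ B c | w ∈ subtree (v ++ sc) e})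
    (hsa : sa.length = 2) (hsm : sm.length = 2) (hsc : sc.length = 2)
    (hma : sm ≠ sa) (hmc : sm ≠ sc) :
    (e + 2 + 1) / 2 + 1 ≤ #{w ∈ B m | w ∈ subtree v (e + 2)} := by
  set P : List (Fin 2) → Prop := fun w => w ∈ subtree v (e + 2) ∧ ¬ v ++ sm <+: w
  have hP {s t : List (Fin 2)} (hs : s.length = 2) (hms : sm ≠ s)
      (ht : t ∈ subtree (v ++ s) e) (w : List (Fin 2)) (hvw : v <+: w) (hwt : w <+: t) :
      P w := by
    refine ⟨⟨hvw, ?_⟩, fun hmw => hms ?_⟩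
    · have := hwt.length_le; have := ht.2; simp only [List.length_append] at *; omega
    · exact List.append_cancel_left <|
        (List.prefix_of_prefix_length_le (hmw.trans hwt) ht.1 (by simp [hs, hsm])).eq_of_length
          (by simp [hs, hsm])
  have chain {s t : List (Fin 2)} (hs : s.length = 2) (hms : sm ≠ s)
      (ht : t ∈ subtree (v ++ s) e) : ReflTransGen (Linked B P) v t :=
    reflTransGen_linked_of_prefix hedge ((List.prefix_append v s).trans ht.1)
      (by have := ht.2; simp only [List.length_append] at this; omega) (hP hs hms ht)
  obtain ⟨x, hx⟩ := card_pos.mp ha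
  obtain ⟨y, hy⟩ := card_pos.mp hc
  rw [mem_filter] at hx hy
  obtain ⟨z, ⟨hzv, hzm⟩, hz⟩ := exists_mem_of_reflTransGen hint
    ((Std.Symm.symm _ _ (chain hsa hma hx.2)).trans (chain hsc hmc hy.2))
    (hP hsa hma hx.2 x ((List.prefix_append v sa).trans hx.2.1) List.prefix_rfl) hx.1 hy.1 hm
  have hsub : insert z {w ∈ B m | w ∈ subtree (v ++ sm) e} ⊆
      {w ∈ B m | w ∈ subtree v (e + 2)} := by
    intro w hw
    obtain rfl | hw := mem_insert.mp hw
    · exact mem_filter.mpr ⟨hz, hzv⟩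
    · obtain ⟨hwm, hw⟩ := mem_filter.mp hw
      exact mem_filter.mpr ⟨hwm, by simpa [hsm] using subtree_append_subset hw⟩
  have hzn : z ∉ {w ∈ B m | w ∈ subtree (v ++ sm) e} := fun h => hzm (mem_filter.mp h).2.1
  calc (e + 2 + 1) / 2 + 1 ≤ #{w ∈ B m | w ∈ subtree (v ++ sm) e} + 1 := by omega
    _ = #(insert z {w ∈ B m | w ∈ subtree (v ++ sm) e}) := (card_insert_of_notMem hzn).symm
    _ ≤ _ := card_le_card hsub

theorem exists_le_card_filter_subtree [LinearOrder ι]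
    (hint : ∀ x, Set.OrdConnected {i | x ∈ B i})
    (hcover : ∀ w : List (Fin 2), w.length ≤ k → ∃ i, w ∈ B i)
    (hedge : CoversEdges k B) :
    ∀ d (v : List (Fin 2)), v.length + d ≤ k →
      ∃ i, (d + 1) / 2 + 1 ≤ #{w ∈ B i | w ∈ subtree v d}
  | 0, v, hv => by
    obtain ⟨i, hi⟩ := hcover v (by omega)
    exact ⟨i, card_pos.mpr ⟨v, mem_filter.mpr ⟨hi, self_mem_subtree v 0⟩⟩⟩
  | 1, v, hv => by
    obtain ⟨i, hvi, hv0i⟩ := hedge v 0 (by omega)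
    refine ⟨i, (card_pair (by simp) : #{v, v ++ [0]} = 2).symm.le.trans (card_le_card ?_)⟩
    intro w hw
    obtain rfl | rfl : w = v ∨ w = v ++ [0] := by simpa using hw
    · exact mem_filter.mpr ⟨hvi, self_mem_subtree w 1⟩
    · exact mem_filter.mpr ⟨hv0i, List.prefix_append _ _, by simp⟩
  | e + 2, v, hv => by
    have heavy (s : List (Fin 2)) (hs : s.length = 2) :
        ∃ i, (e + 1) / 2 + 1 ≤ #{w ∈ B i | w ∈ subtree (v ++ s) e} :=
      exists_le_card_filter_subtree hint hcover hedge e (v ++ s)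
        (by simp only [List.length_append]; omega)
    obtain ⟨i₁, h₁⟩ := heavy [0, 0] rfl
    obtain ⟨i₂, h₂⟩ := heavy [0, 1] rfl
    obtain ⟨i₃, h₃⟩ := heavy [1, 0] rfl
    have pos {i s} (h : (e + 1) / 2 + 1 ≤ #{w ∈ B i | w ∈ subtree (v ++ s) e}) :
        0 < #{w ∈ B i | w ∈ subtree (v ++ s) e} :=
      (Nat.succ_pos _).trans_le h
    rcases mem_uIcc_or_mem_uIcc_or_mem_uIcc i₁ i₂ i₃ with hm | hm | hm
    · exact ⟨i₁, le_card_filter_subtree_add_two hint hedge hv hm (pos h₂) h₁ (pos h₃)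
        rfl rfl rfl (by decide) (by decide)⟩
    · exact ⟨i₂, le_card_filter_subtree_add_two hint hedge hv hm (pos h₁) h₂ (pos h₃)
        rfl rfl rfl (by decide) (by decide)⟩
    · exact ⟨i₃, le_card_filter_subtree_add_two hint hedge hv hm (pos h₁) h₃ (pos h₂)
        rfl rfl rfl (by decide) (by decide)⟩

end LowerBound

/-- The pathwidth of the full binary tree of depth `k` (nodes: binary strings of
length at most `k`, edges from `v` to `v ++ [j]`) is exactly `⌈k/2⌉`: the least
`p` admitting a path decomposition with all bags of size at most `p + 1` is
`(k + 1) / 2`. -/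
theorem pathwidth_full_binary_tree (k : ℕ) :
    IsLeast { p : ℕ |
      ∃ (n : ℕ) (B : Fin (n + 1) → Finset (List (Fin 2))),
        (∀ i, ∀ v ∈ B i, v.length ≤ k) ∧
        (∀ v : List (Fin 2), v.length ≤ k → ∃ i, v ∈ B i) ∧
        (∀ (v : List (Fin 2)) (j : Fin 2), v.length < k →
          ∃ i, v ∈ B i ∧ v ++ [j] ∈ B i) ∧
        (∀ i j l : Fin (n + 1), i ≤ j → j ≤ l →
          ∀ v, v ∈ B i → v ∈ B l → v ∈ B j) ∧
        (∀ i, (B i).card ≤ p + 1) }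
      ((k + 1) / 2) := by
  refine ⟨?_, fun p ⟨n, B, _, hcover, hedge, hint, hcard⟩ => ?_⟩
  · have hD := isPathDecompOfSubtree_decomp k []
    obtain ⟨S, hS, -⟩ := hD.cover [] (self_mem_subtree [] k)
    obtain ⟨n, B, hmem, hsurj, hint⟩ := List.exists_fin_enum_of_ne_nil (List.ne_nil_of_mem hS)
    refine ⟨n, B, fun i w hw => by simpa [subtree] using hD.subset _ (hmem i) w hw,
      fun w hw => ?_, fun w j hw => ?_, fun i j l hij hjl w => hint _ (hD.interval w) i j l hij hjl,
      fun i => card_le_of_mem_decomp k [] _ (hmem i)⟩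
    · obtain ⟨S, hS, hwS⟩ := hD.cover w (by simpa [subtree] using hw)
      obtain ⟨i, rfl⟩ := hsurj S hS
      exact ⟨i, hwS⟩
    · obtain ⟨S, hS, hwS⟩ := hD.edge w j List.nil_prefix (by simpa using hw)
      obtain ⟨i, rfl⟩ := hsurj S hS
      exact ⟨i, hwS⟩
  · have hint' (x : List (Fin 2)) : Set.OrdConnected {i | x ∈ B i} :=
      ⟨fun i hi l hl j ⟨hij, hjl⟩ => hint i j l hij hjl x hi hl⟩
    obtain ⟨i, hi⟩ := exists_le_card_filter_subtree hint' hcover hedge k [] (by simp)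
    have := hi.trans ((card_filter_le _ _).trans (hcard i))
    omega
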